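/- For any L, U ∈ ℕ₊ there exist a depth J ≤ (7U+15)L/(s−1) + 3U + 2, a depth-J CNN h_J with input dimension L, and integers n₁, n₂ ≥ 0 such that for every y ∈ [0,1]^L one has h_J(y) = [0_{n₁}; R_U(y); 0_{7L}; y; 0_{n₂}], where R_U is applied componentwise. -/

import Mathlib

noncomputable section

open Finset

/-- The ReLU function. -/
def relu (t : ℝ) : ℝ := max t 0

/-- Zero extension of a filter `w ∈ ℝ^{m+1}` to all of `ℕ` (`w_j := 0` for `j ∉ {0,…,m}`). -/
def filt {m : ℕ} (w : Fin (m + 1) → ℝ) : ℕ → ℝ :=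
  fun j => if h : j < m + 1 then w ⟨j, h⟩ else 0

/-- Discrete convolution of a filter `w ∈ ℝ^{m+1}` with a vector `x ∈ ℝ^n`
(represented as `x : ℕ → ℝ`, entries of index `≥ n` being ignored), producing a vector
in `ℝ^{n+m}`: `(w*x)_i = ∑_{k<n} w_{i-k} x_k` (zero-based indexing). -/
def conv {m : ℕ} (w : Fin (m + 1) → ℝ) (n : ℕ) (x : ℕ → ℝ) : ℕ → ℝ :=
  fun i => ∑ k ∈ Finset.range n, if k ≤ i then filt w (i - k) * x k else 0

/-- One CNN layer with filter `w ∈ ℝ^{s+1}` and bias `b`, acting on a vector of length `n`: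
`x ↦ σ(w*x + b) ∈ ℝ^{n+s}` (entries of index `≥ n+s` are set to `0`). -/
def layer (s : ℕ) (w : Fin (s + 1) → ℝ) (b : ℕ → ℝ) (n : ℕ) (x : ℕ → ℝ) : ℕ → ℝ :=
  fun i => if i < n + s then relu (conv w n x i + b i) else 0

/-- Apply a list of CNN layers (given by their filter/bias pairs) to a vector of length `n`;
a list of length `L` yields the depth-`L` CNN map `h_L = σ∘A_{w_L,b_L}∘⋯∘σ∘A_{w_1,b_1}`. -/
def applyCNN (s : ℕ) : List ((Fin (s + 1) → ℝ) × (ℕ → ℝ)) → ℕ → (ℕ → ℝ) → (ℕ → ℝ)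
  | [], _, x => x
  | wb :: ps, n, x => applyCNN s ps (n + s) (layer s wb.1 wb.2 n x)

/-- A vector `x ∈ ℝ^n` viewed as an element of `ℕ → ℝ` (zero outside `{0,…,n-1}`). -/
def embed (n : ℕ) (x : Fin n → ℝ) : ℕ → ℝ := fun i => if h : i < n then x ⟨i, h⟩ else 0

/-- The sawtooth function `T₁`. -/
def T1 (x : ℝ) : ℝ := if x ≤ 1 / 2 then 2 * x else 2 * (1 - x)

/-- `R_U(x) = x - ∑_{i=1}^U T_i(x)/4^i`, where `T_i = T₁∘⋯∘T₁` (`i` times). -/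
def RU (U : ℕ) (x : ℝ) : ℝ := x - ∑ i ∈ Finset.Icc 1 U, T1^[i] x / 4 ^ i

open Polynomial




lemma relu_of_nonneg {t : ℝ} (h : 0 ≤ t) : relu t = t := max_eq_left h
lemma relu_of_nonpos {t : ℝ} (h : t ≤ 0) : relu t = 0 := max_eq_right h
lemma relu_nonneg (t : ℝ) : 0 ≤ relu t := le_max_right _ _

lemma T1_mem {x : ℝ} (h : x ∈ Set.Icc (0:ℝ) 1) : T1 x ∈ Set.Icc (0:ℝ) 1 := by
  obtain ⟨h0, h1⟩ := h
  unfold T1; split <;> constructor <;> linarith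

lemma T1_iter_mem {x : ℝ} (h : x ∈ Set.Icc (0:ℝ) 1) (k : ℕ) : T1^[k] x ∈ Set.Icc (0:ℝ) 1 := by
  induction k with
  | zero => simpa
  | succ n ih => rw [Function.iterate_succ_apply']; exact T1_mem ih

lemma T1_eval {x : ℝ} (h : x ∈ Set.Icc (0:ℝ) 1) :
    relu (2 * x - 4 * relu (x - 1/2)) = T1 x := by
  obtain ⟨h0, h1⟩ := h
  unfold T1
  by_cases hx : x ≤ 1/2
  · rw [if_pos hx, relu_of_nonpos (show x - 1/2 ≤ 0 by linarith)]
    rw [relu_of_nonneg (show (0:ℝ) ≤ 2 * x - 4 * 0 by linarith)]; ring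
  · rw [if_neg hx, relu_of_nonneg (show (0:ℝ) ≤ x - 1/2 by linarith)]
    rw [relu_of_nonneg (show (0:ℝ) ≤ 2 * x - 4 * (x - 1/2) by linarith)]; ring

lemma RU_zero (x : ℝ) : RU 0 x = x := by simp [RU]

lemma RU_succ (k : ℕ) (x : ℝ) : RU (k+1) x = RU k x - T1^[k+1] x / 4^(k+1) := by
  unfold RU
  rw [Finset.sum_Icc_succ_top (by omega)]
  ring

lemma RU_eq_range (k : ℕ) (x : ℝ) : RU k x = x - ∑ i ∈ Finset.range k, T1^[i+1] x / 4^(i+1) := by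
  unfold RU
  congr 1
  rw [show Finset.Icc 1 k = Finset.Ico 1 (k+1) by rw [Finset.Ico_add_one_right_eq_Icc], Finset.sum_Ico_eq_sum_range]
  simp only [Nat.add_sub_cancel]
  exact Finset.sum_congr rfl (fun i _ => by rw [Nat.add_comm 1 i])

lemma RU_rec (m : ℕ) (x : ℝ) : RU (m+1) x = (x - T1 x / 2) + RU m (T1 x) / 4 := by
  rw [RU_eq_range, RU_eq_range, Finset.sum_range_succ']
  have h1 : ∀ i ∈ Finset.range m, T1^[i+1+1] x / 4^(i+1+1) = (T1^[i+1] (T1 x) / 4^(i+1)) / 4 :=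
    fun i _ => by rw [Function.iterate_succ_apply]; ring
  rw [Finset.sum_congr rfl h1, ← Finset.sum_div]
  simp only [zero_add, Function.iterate_one, pow_one]
  ring

lemma RU_nonneg {x : ℝ} (h : x ∈ Set.Icc (0:ℝ) 1) (k : ℕ) : 0 ≤ RU k x := by
  induction k generalizing x with
  | zero => rw [RU_zero]; exact h.1
  | succ m ih =>
    rw [RU_rec]
    have h2 := T1_mem h
    have := ih h2
    obtain ⟨h0, h1⟩ := h
    have hx : 0 ≤ x - T1 x / 2 := by
      unfold T1; split <;> linarith
    linarith

lemma RU_le {x : ℝ} (h : x ∈ Set.Icc (0:ℝ) 1) (k : ℕ) : RU k x ≤ x := by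
  unfold RU
  have : 0 ≤ ∑ i ∈ Finset.Icc 1 k, T1^[i] x / 4 ^ i := by
    apply Finset.sum_nonneg
    intro i _
    have := (T1_iter_mem h i).1
    positivity
  linarith

-- extract an irreducible (degree 1 or 2) factor
lemma exists_small_factor (p : ℝ[X]) (hp : p ≠ 0) (h1 : 1 ≤ p.natDegree) :
    ∃ q r : ℝ[X], p = q * r ∧ 1 ≤ q.natDegree ∧ q.natDegree ≤ 2 := by
  have hnu : ¬ IsUnit p := by
    intro h
    have := Polynomial.natDegree_eq_zero_of_isUnit h
    omega
  obtain ⟨q, hqirr, hqdvd⟩ := WfDvdMonoid.exists_irreducible_factor hnu hp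
  obtain ⟨r, hr⟩ := hqdvd
  refine ⟨q, r, hr, ?_, hqirr.natDegree_le_two⟩
  have := hqirr.natDegree_pos
  omega

lemma grab_factor (s : ℕ) : ∀ k : ℕ, ∀ p : ℝ[X], p ≠ 0 → k ≤ p.natDegree →
    ∃ g r : ℝ[X], p = g * r ∧ k ≤ g.natDegree ∧ g.natDegree ≤ k + 1 := by
  intro k
  induction k with
  | zero => intro p hp _; exact ⟨1, p, by simp, by simp, by simp⟩
  | succ m ih =>
    intro p hp hdeg
    obtain ⟨g, r, hgr, hg1, hg2⟩ := ih p hp (by omega)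
    have hg0 : g ≠ 0 := by rintro rfl; simp at hgr; exact hp hgr
    have hr0 : r ≠ 0 := by rintro rfl; simp at hgr; exact hp hgr
    by_cases hc : m + 1 ≤ g.natDegree
    · exact ⟨g, r, hgr, hc, by omega⟩
    · have hdegsum : p.natDegree = g.natDegree + r.natDegree := by
        rw [hgr]; exact Polynomial.natDegree_mul hg0 hr0
      have hrdeg : 1 ≤ r.natDegree := by omega
      obtain ⟨q, r', hr', hq1, hq2⟩ := exists_small_factor r hr0 hrdeg
      have hq0 : q ≠ 0 := by
        rintro rfl; rw [zero_mul] at hr'; exact hr0 hr'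
      refine ⟨g * q, r', by rw [hgr, hr', mul_assoc], ?_, ?_⟩ <;>
        rw [Polynomial.natDegree_mul hg0 hq0] <;> omega

lemma factor_list (s : ℕ) (hs : 2 ≤ s) : ∀ D : ℕ, ∀ p : ℝ[X], p ≠ 0 → p.natDegree ≤ D →
    ∃ fs : List ℝ[X], fs.prod = p ∧ fs ≠ [] ∧ (∀ f ∈ fs, f ≠ 0 ∧ f.natDegree ≤ s) ∧
      (fs.length - 1) * (s - 1) ≤ p.natDegree := by
  intro D
  induction D with
  | zero =>
    intro p hp hdeg
    exact ⟨[p], by simp, by simp, by simp [hp]; omega, by simp⟩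
  | succ D ih =>
    intro p hp hdeg
    by_cases hds : p.natDegree ≤ s
    · exact ⟨[p], by simp, by simp, by simp [hp]; omega, by simp⟩
    · obtain ⟨g, r, hgr, hg1, hg2⟩ := grab_factor s (s-1) p hp (by omega)
      have hg0 : g ≠ 0 := by rintro rfl; simp at hgr; exact hp hgr
      have hr0 : r ≠ 0 := by rintro rfl; simp at hgr; exact hp hgr
      have hdegsum : p.natDegree = g.natDegree + r.natDegree := by
        rw [hgr]; exact Polynomial.natDegree_mul hg0 hr0
      obtain ⟨fs, hprod, hne, hall, hlen⟩ := ih r hr0 (by omega)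
      refine ⟨g :: fs, by simp [hprod, hgr], by simp, ?_, ?_⟩
      · intro f hf
        rcases List.mem_cons.mp hf with h | h
        · subst h; exact ⟨hg0, by omega⟩
        · exact hall f h
      · simp only [List.length_cons]
        have : fs.length ≥ 1 := List.length_pos_iff.mpr hne
        have h2 : (fs.length - 1) * (s-1) + (s-1) ≤ r.natDegree + (s-1) := by omega
        have hn : fs.length = (fs.length - 1) + 1 := by omega
        calc (fs.length + 1 - 1) * (s - 1) = ((fs.length - 1) + 1) * (s-1) := by
              rw [Nat.add_sub_cancel, ← hn]
          _ = (fs.length - 1) * (s-1) + (s-1) := by rw [Nat.succ_mul]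
          _ ≤ r.natDegree + (s - 1) := h2
          _ ≤ p.natDegree := by omega


def stateOf (n : ℕ) (Q : ℝ[X]) (c : ℝ) : ℕ → ℝ := fun i => if i < n then Q.coeff i + c else 0
def filtOf (s : ℕ) (f : ℝ[X]) : Fin (s+1) → ℝ := fun k => f.coeff k
def En (n : ℕ) : ℝ[X] := ∑ k ∈ Finset.range n, X^k
def pnorm (f : ℝ[X]) : ℝ := ∑ j ∈ Finset.range (f.natDegree + 1), |f.coeff j|

lemma filt_filtOf (s : ℕ) (f : ℝ[X]) (hf : f.natDegree ≤ s) (j : ℕ) :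
    filt (filtOf s f) j = f.coeff j := by
  unfold filt filtOf
  split
  · rfl
  · symm; apply coeff_eq_zero_of_natDegree_lt; omega

lemma natDegree_lt_of_coeff (P : ℝ[X]) (n : ℕ) (hn : 0 < n)
    (h : ∀ i, n ≤ i → P.coeff i = 0) : P.natDegree < n := by
  by_cases hP : P = 0
  · simpa [hP]
  · by_contra hc
    push_neg at hc
    exact Polynomial.leadingCoeff_ne_zero.mpr hP (h _ hc)

lemma En_coeff (n k : ℕ) : (En n).coeff k = if k < n then 1 else 0 := by
  unfold En
  rw [Polynomial.finset_sum_coeff]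
  simp only [Polynomial.coeff_X_pow]
  rw [Finset.sum_ite_eq (Finset.range n) k (fun _ => (1:ℝ))]
  simp [Finset.mem_range]

lemma En_natDegree_lt (n : ℕ) (hn : 0 < n) : (En n).natDegree < n := by
  apply natDegree_lt_of_coeff _ _ hn
  intro i hi
  rw [En_coeff]
  simp; omega

lemma mul_coeff_eq_sum (f Q : ℝ[X]) (n : ℕ) (hQ : Q.natDegree < n) (i : ℕ) :
    (f * Q).coeff i = ∑ k ∈ Finset.range n, if k ≤ i then f.coeff (i - k) * Q.coeff k else 0 := by
  have key : ∀ N : ℕ, n ≤ N → i + 1 ≤ N →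
      (∑ k ∈ Finset.range N, if k ≤ i then f.coeff (i - k) * Q.coeff k else 0) =
      (f * Q).coeff i ∧
      (∑ k ∈ Finset.range N, if k ≤ i then f.coeff (i - k) * Q.coeff k else 0) =
      ∑ k ∈ Finset.range n, if k ≤ i then f.coeff (i - k) * Q.coeff k else 0 := by
    intro N hnN hiN
    constructor
    · rw [mul_comm, Polynomial.coeff_mul, Finset.Nat.sum_antidiagonal_eq_sum_range_succ_mk]
      rw [← Finset.sum_subset (Finset.range_subset_range.mpr hiN)]
      · apply Finset.sum_congr rfl
        intro k hk
        rw [if_pos (by simp at hk; omega), mul_comm]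
      · intro k _ hk
        simp only [Finset.mem_range] at hk
        rw [if_neg (by omega)]
    · symm
      apply Finset.sum_subset (Finset.range_subset_range.mpr hnN)
      intro k hk hk2
      simp only [Finset.mem_range] at hk2
      rw [Polynomial.coeff_eq_zero_of_natDegree_lt (by omega : Q.natDegree < k)]
      simp
  obtain ⟨h1, h2⟩ := key (n + i + 1) (by omega) (by omega)
  rw [← h1, h2]

lemma pnorm_nonneg (f : ℝ[X]) : 0 ≤ pnorm f :=
  Finset.sum_nonneg fun _ _ => abs_nonneg _

lemma sum_abs_coeff_le (f : ℝ[X]) (m : ℕ) :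
    ∑ j ∈ Finset.range m, |f.coeff j| ≤ pnorm f := by
  rcases le_or_gt m (f.natDegree + 1) with h | h
  · exact Finset.sum_le_sum_of_subset_of_nonneg (Finset.range_subset_range.mpr h)
      (fun _ _ _ => abs_nonneg _)
  · apply le_of_eq
    symm
    apply Finset.sum_subset (Finset.range_subset_range.mpr (by omega))
    intro k _ hk
    simp only [Finset.mem_range] at hk
    rw [Polynomial.coeff_eq_zero_of_natDegree_lt (by omega)]
    simp

lemma coeff_mul_bound (f Q : ℝ[X]) (B : ℝ) (h : ∀ k, |Q.coeff k| ≤ B) (i : ℕ) :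
    |(f * Q).coeff i| ≤ pnorm f * B := by
  have hB : 0 ≤ B := le_trans (abs_nonneg _) (h 0)
  rw [mul_comm, Polynomial.coeff_mul, Finset.Nat.sum_antidiagonal_eq_sum_range_succ_mk]
  calc |∑ k ∈ Finset.range (i+1), Q.coeff k * f.coeff (i - k)|
      ≤ ∑ k ∈ Finset.range (i+1), |Q.coeff k * f.coeff (i - k)| :=
        Finset.abs_sum_le_sum_abs _ _
    _ ≤ ∑ k ∈ Finset.range (i+1), B * |f.coeff (i - k)| := by
        apply Finset.sum_le_sum
        intro k _
        rw [abs_mul]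
        exact mul_le_mul_of_nonneg_right (h k) (abs_nonneg _)
    _ = B * ∑ k ∈ Finset.range (i+1), |f.coeff (i - k)| := by rw [Finset.mul_sum]
    _ = B * ∑ j ∈ Finset.range (i+1), |f.coeff j| := by
        congr 1
        rw [← Finset.sum_range_reflect]
        apply Finset.sum_congr rfl
        intro k hk
        simp only [Finset.mem_range] at hk
        congr 2
        omega
    _ ≤ B * pnorm f := mul_le_mul_of_nonneg_left (sum_abs_coeff_le f _) hB
    _ = pnorm f * B := mul_comm _ _

lemma conv_stateOf (s : ℕ) (f : ℝ[X]) (hf : f.natDegree ≤ s) (n : ℕ) (hn : 0 < n)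
    (Q : ℝ[X]) (hQ : Q.natDegree < n) (c : ℝ) (i : ℕ) :
    conv (filtOf s f) n (stateOf n Q c) i = (f * Q).coeff i + c * (f * En n).coeff i := by
  unfold conv stateOf
  have step : ∀ k ∈ Finset.range n,
      (if k ≤ i then filt (filtOf s f) (i - k) * (if k < n then Q.coeff k + c else 0) else 0) =
      (if k ≤ i then f.coeff (i - k) * Q.coeff k else 0) +
      c * (if k ≤ i then f.coeff (i - k) * (En n).coeff k else 0) := by
    intro k hk
    simp only [Finset.mem_range] at hk
    rw [if_pos hk, filt_filtOf s f hf, En_coeff, if_pos hk]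
    split
    · ring
    · ring
  rw [Finset.sum_congr rfl step, Finset.sum_add_distrib, ← Finset.mul_sum]
  rw [← mul_coeff_eq_sum f Q n hQ i, ← mul_coeff_eq_sum f (En n) n (En_natDegree_lt n hn) i]

lemma applyCNN_append (s : ℕ) (a b : List ((Fin (s + 1) → ℝ) × (ℕ → ℝ))) :
    ∀ (n : ℕ) (x : ℕ → ℝ),
    applyCNN s (a ++ b) n x = applyCNN s b (n + a.length * s) (applyCNN s a n x) := by
  induction a with
  | nil => intro n x; simp [applyCNN]
  | cons wb ps ih =>
    intro n x
    show applyCNN s (ps ++ b) (n + s) (layer s wb.1 wb.2 n x) = _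
    rw [ih]
    have h2 : applyCNN s (wb :: ps) n x = applyCNN s ps (n + s) (layer s wb.1 wb.2 n x) := rfl
    rw [h2]
    congr 1
    simp only [List.length_cons]
    ring

lemma stateOf_eq (n : ℕ) (Q : ℝ[X]) (c : ℝ) (i : ℕ) :
    stateOf n Q c i = if i < n then Q.coeff i + c else 0 := rfl

-- Lemma A: affine realization of a product of small filters
lemma realize_affine (s : ℕ) (hs : 2 ≤ s) (fs : List ℝ[X]) (hfs : ∀ f ∈ fs, f.natDegree ≤ s) :
    ∀ (n : ℕ), 0 < n → ∀ (c B : ℝ), 0 ≤ B →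
    ∃ (ps : List ((Fin (s + 1) → ℝ) × (ℕ → ℝ))) (Cf : ℝ),
      ps.length = fs.length ∧
      ∀ Q : ℝ[X], Q.natDegree < n → (∀ k, |Q.coeff k| ≤ B) →
        applyCNN s ps n (stateOf n Q c) = stateOf (n + fs.length * s) (fs.prod * Q) Cf := by
  induction fs with
  | nil =>
    intro n hn c B hB
    refine ⟨[], c, rfl, fun Q hQ hQB => ?_⟩
    simp [applyCNN]
  | cons f fs ih =>
    intro n hn c B hB
    have hf : f.natDegree ≤ s := hfs f List.mem_cons_self
    set C1 : ℝ := pnorm f * B with hC1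
    have hC1nn : 0 ≤ C1 := mul_nonneg (pnorm_nonneg f) hB
    obtain ⟨ps', Cf, hlen, hsem⟩ := ih (fun g hg => hfs g (List.mem_cons_of_mem f hg))
      (n + s) (by omega) C1 (pnorm f * B) (by positivity)
    set b1 : ℕ → ℝ := fun i => C1 - c * ((f * En n).coeff i) with hb1
    refine ⟨(filtOf s f, b1) :: ps', Cf, by simp [hlen], fun Q hQ hQB => ?_⟩
    have hlay : layer s (filtOf s f) b1 n (stateOf n Q c) = stateOf (n + s) (f * Q) C1 := by
      funext i
      unfold layer
      rw [stateOf_eq]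
      split
      · rw [conv_stateOf s f hf n hn Q hQ c i]
        have hbd := coeff_mul_bound f Q B hQB i
        rw [hb1]
        have : (f * Q).coeff i + c * (f * En n).coeff i + (C1 - c * (f * En n).coeff i)
            = (f * Q).coeff i + C1 := by ring
        rw [this, relu_of_nonneg (by rw [hC1]; cases abs_le.mp hbd; linarith)]
      · rfl
    show applyCNN s ps' (n + s) (layer s (filtOf s f) b1 n (stateOf n Q c)) = _
    rw [hlay]
    have hdeg : (f * Q).natDegree < n + s := by
      have := Polynomial.natDegree_mul_le (p := f) (q := Q)
      omega
    rw [hsem (f * Q) (by omega) (fun k => coeff_mul_bound f Q B hQB k)]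
    have : fs.prod * (f * Q) = (f :: fs).prod * Q := by
      rw [List.prod_cons]; ring
    rw [this]
    congr 1
    simp only [List.length_cons]
    ring


-- Lemma B: macro layer realization
lemma realize_macro (s : ℕ) (hs : 2 ≤ s) (v : ℝ[X]) (hv : v ≠ 0) (n : ℕ) (hn : 0 < n)
    (B : ℝ) (hB : 0 ≤ B) (β : ℕ → ℝ) :
    ∃ (ps : List ((Fin (s + 1) → ℝ) × (ℕ → ℝ))) (p : ℕ),
      ps.length = p ∧ 1 ≤ p ∧ (p - 1) * (s - 1) ≤ v.natDegree ∧ v.natDegree ≤ p * s ∧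
      ∀ Q : ℝ[X], Q.natDegree < n → (∀ k, |Q.coeff k| ≤ B) →
        applyCNN s ps n (stateOf n Q 0) =
          fun i => if i < n + p * s then relu ((v * Q).coeff i + β i) else 0 := by
  obtain ⟨fs, hprod, hne, hall, hlen⟩ := factor_list s hs v.natDegree v hv le_rfl
  obtain ⟨gs, g, rfl⟩ := (List.eq_nil_or_concat' fs).resolve_left hne
  have hg : g.natDegree ≤ s := (hall g (by simp)).2
  have hgs : ∀ f ∈ gs, f.natDegree ≤ s := fun f hf => (hall f (by simp [hf])).2
  obtain ⟨ps', Cf, hlen', hsem⟩ := realize_affine s hs gs hgs n hn 0 B hB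
  set n' : ℕ := n + gs.length * s with hn'
  set bβ : ℕ → ℝ := fun i => β i - Cf * ((g * En n').coeff i) with hbβ
  have hlenapp : (gs ++ [g]).length = gs.length + 1 := by simp
  refine ⟨ps' ++ [(filtOf s g, bβ)], gs.length + 1, by simp [hlen'], by omega, ?_, ?_, ?_⟩
  · calc (gs.length + 1 - 1) * (s - 1) = ((gs ++ [g]).length - 1) * (s - 1) := by rw [hlenapp]
      _ ≤ v.natDegree := hlen
  · rw [← hprod]
    calc ((gs ++ [g]).prod).natDegree ≤ ((gs ++ [g]).map Polynomial.natDegree).sum :=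
          Polynomial.natDegree_list_prod_le _
      _ ≤ ((gs ++ [g]).map Polynomial.natDegree).length * s := by
          apply List.sum_le_card_nsmul
          intro x hx
          simp only [List.mem_map] at hx
          obtain ⟨f, hf, rfl⟩ := hx
          exact (hall f hf).2
      _ = (gs.length + 1) * s := by simp
  · intro Q hQ hQB
    rw [applyCNN_append, hsem Q hQ hQB, hlen']
    show layer s (filtOf s g) bβ n' (stateOf n' (gs.prod * Q) Cf) = _
    funext i
    unfold layer
    have hdeg' : (gs.prod * Q).natDegree < n' := by
      have h1 : (gs.prod * Q).natDegree ≤ gs.prod.natDegree + Q.natDegree :=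
        Polynomial.natDegree_mul_le
      have h2 : gs.prod.natDegree ≤ gs.length * s := by
        calc gs.prod.natDegree ≤ (gs.map Polynomial.natDegree).sum :=
              Polynomial.natDegree_list_prod_le _
          _ ≤ (gs.map Polynomial.natDegree).length * s := by
            apply List.sum_le_card_nsmul
            intro x hx
            simp only [List.mem_map] at hx
            obtain ⟨f, hf, rfl⟩ := hx
            exact hgs f hf
          _ = gs.length * s := by simp
      omega
    have hnn' : 0 < n' := by omega
    rw [conv_stateOf s g hg n' hnn' (gs.prod * Q) hdeg' Cf i]
    have harr : g * (gs.prod * Q) = v * Q := by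
      rw [← hprod, List.prod_append, List.prod_singleton]
      ring
    have hval : (g * (gs.prod * Q)).coeff i + Cf * (g * En n').coeff i + bβ i
        = (v * Q).coeff i + β i := by
      simp only [hbβ, harr]
      ring
    have hlen2 : n + (gs.length + 1) * s = n' + s := by rw [Nat.succ_mul]; omega
    rw [hval, hlen2]

-- Slot machinery
def QF (L m : ℕ) (F : ℕ → ℕ → ℝ) : ℝ[X] :=
  ∑ q ∈ Finset.range m, ∑ j ∈ Finset.range L, C (F q j) * X^(q*L + j)

lemma slot_div (L q j : ℕ) (hL : 0 < L) (hj : j < L) : (q*L+j)/L = q ∧ (q*L+j)%L = j := by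
  exact (Nat.div_mod_unique (a := q*L+j) (b := L) (d := q) (c := j) hL).mpr ⟨by ring, hj⟩

lemma QF_coeff (L : ℕ) (hL : 0 < L) (m : ℕ) (F : ℕ → ℕ → ℝ) (i : ℕ) :
    (QF L m F).coeff i = if i < m*L then F (i/L) (i%L) else 0 := by
  unfold QF
  rw [Polynomial.finset_sum_coeff]
  have hterm : ∀ q j : ℕ, (C (F q j) * X^(q*L + j)).coeff i
      = if i = q*L + j then F q j else 0 := by
    intro q j
    rw [Polynomial.coeff_C_mul, Polynomial.coeff_X_pow]
    split <;> simp
  by_cases him : i < m * L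
  · have hq : i / L < m := Nat.div_lt_iff_lt_mul hL |>.mpr (by omega)
    have hdm : i = (i/L)*L + (i%L) := (Nat.div_add_mod' i L).symm
    rw [if_pos him]
    rw [Finset.sum_eq_single (i/L)]
    · rw [Polynomial.finset_sum_coeff, Finset.sum_eq_single (i%L)]
      · rw [hterm, if_pos hdm]
      · intro j hj hne
        rw [hterm, if_neg]
        intro hij
        have := (slot_div L (i/L) j hL (Finset.mem_range.mp hj)).2
        omega
      · intro h
        exact absurd (Finset.mem_range.mpr (Nat.mod_lt i hL)) h
    · intro q hq' hne
      rw [Polynomial.finset_sum_coeff, Finset.sum_eq_zero]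
      intro j hj
      rw [hterm, if_neg]
      intro hij
      have h1 := (slot_div L q j hL (Finset.mem_range.mp hj)).1
      rw [← hij] at h1
      exact hne h1.symm
    · intro h
      exact absurd (Finset.mem_range.mpr hq) h
  · rw [if_neg him, Finset.sum_eq_zero]
    intro q hq
    rw [Polynomial.finset_sum_coeff, Finset.sum_eq_zero]
    intro j hj
    rw [hterm, if_neg]
    intro hij
    simp only [Finset.mem_range] at hq hj
    have h1 : q*L + j < m*L := by
      have h2 : q + 1 ≤ m := hq
      have := Nat.mul_le_mul_right L h2
      rw [Nat.succ_mul] at this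
      omega
    omega

lemma QF_coeff_bound (L : ℕ) (hL : 0 < L) (m : ℕ) (F : ℕ → ℕ → ℝ) (B : ℝ) (hB : 0 ≤ B)
    (h : ∀ q j, |F q j| ≤ B) (k : ℕ) : |(QF L m F).coeff k| ≤ B := by
  rw [QF_coeff L hL]
  split
  · exact h _ _
  · simpa

lemma QF_deg (L : ℕ) (hL : 0 < L) (m : ℕ) (F : ℕ → ℕ → ℝ) (n : ℕ) (hn : 0 < n)
    (hmn : m*L ≤ n) : (QF L m F).natDegree < n := by
  apply natDegree_lt_of_coeff _ _ hn
  intro i hi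
  rw [QF_coeff L hL, if_neg (by omega)]

lemma coeff_CX_mul (a : ℝ) (r : ℕ) (Q : ℝ[X]) (i : ℕ) :
    ((C a * X^r) * Q).coeff i = a * (if r ≤ i then Q.coeff (i - r) else 0) := by
  rw [mul_comm (C a * X^r) Q, ← mul_assoc, Polynomial.coeff_mul_X_pow']
  split
  · rw [Polynomial.coeff_mul_C]; ring
  · simp

lemma tap_guard (L q j r : ℕ) (hj : j < L) : (r*L ≤ q*L + j) ↔ r ≤ q := by
  constructor
  · intro h
    by_contra hc
    push_neg at hc
    have h2 : (q+1)*L ≤ r*L := Nat.mul_le_mul_right L (by omega)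
    rw [Nat.succ_mul] at h2
    omega
  · intro h
    have := Nat.mul_le_mul_right L h
    omega

lemma tap_sub (L q j r : ℕ) (hrq : r ≤ q) : q*L + j - r*L = (q-r)*L + j := by
  have : (q-r)*L + r*L = q*L := by
    rw [← Nat.add_mul]
    congr 1
    omega
  omega

-- the macro step in slot form
lemma macro_step (s : ℕ) (hs : 2 ≤ s) (L : ℕ) (hL : 0 < L) (v : ℝ[X]) (hv : v ≠ 0)
    (n m m' : ℕ) (hn : 0 < n) (hmn : m * L ≤ n) (hm' : m' * L ≤ n + v.natDegree)
    (gβ : ℕ → ℝ) :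
    ∃ (ps : List ((Fin (s + 1) → ℝ) × (ℕ → ℝ))) (p : ℕ),
      ps.length = p ∧ 1 ≤ p ∧ (p-1)*(s-1) ≤ v.natDegree ∧ v.natDegree ≤ p*s ∧
      m' * L ≤ n + p*s ∧
      ∀ (F F' : ℕ → ℕ → ℝ),
        (∀ q j, |F q j| ≤ 2) →
        (∀ q j, j < L → relu ((v * QF L m F).coeff (q*L+j) + gβ q) = F' q j) →
        (∀ q j, m' ≤ q → F' q j = 0) →
        applyCNN s ps n (stateOf n (QF L m F) 0) = stateOf (n + p*s) (QF L m' F') 0 := by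
  obtain ⟨ps, p, h1, h2, h3, h4, hsem⟩ :=
    realize_macro s hs v hv n hn 2 (by norm_num) (fun i => gβ (i / L))
  refine ⟨ps, p, h1, h2, h3, h4, by omega, ?_⟩
  intro F F' hFbd H1 H2
  rw [hsem (QF L m F) (QF_deg L hL m F n hn hmn)
    (QF_coeff_bound L hL m F 2 (by norm_num) hFbd)]
  funext i
  by_cases hi : i < n + p*s
  · rw [if_pos hi, stateOf_eq, if_pos hi, add_zero, QF_coeff L hL]
    have hdm : i = (i/L)*L + (i%L) := (Nat.div_add_mod' i L).symm
    have h := H1 (i/L) (i%L) (Nat.mod_lt i hL)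
    rw [← hdm] at h
    rw [h]
    split
    · rfl
    · exact H2 _ _ (by rw [Nat.le_div_iff_mul_le hL]; omega)
  · rw [if_neg hi, stateOf_eq, if_neg hi]

-- tap polynomials
def tapPoly (L : ℕ) (ts : List (ℕ × ℝ)) : ℝ[X] := (ts.map fun t => C t.2 * X^(t.1 * L)).sum

lemma tapPoly_mul_coeff (L : ℕ) (hL : 0 < L) (ts : List (ℕ × ℝ)) (Q : ℝ[X]) (q j : ℕ)
    (hj : j < L) :
    ((tapPoly L ts) * Q).coeff (q*L+j) =
      (ts.map fun t => if t.1 ≤ q then t.2 * Q.coeff ((q - t.1)*L + j) else 0).sum := by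
  induction ts with
  | nil => simp [tapPoly]
  | cons t ts ih =>
    have : tapPoly L (t :: ts) = C t.2 * X^(t.1*L) + tapPoly L ts := by
      simp [tapPoly]
    rw [this, add_mul, Polynomial.coeff_add, ih, coeff_CX_mul]
    simp only [List.map_cons, List.sum_cons]
    congr 1
    by_cases h : t.1 ≤ q
    · rw [if_pos ((tap_guard L q j t.1 hj).mpr h), if_pos h, tap_sub L q j t.1 h]
    · rw [if_neg (fun hc => h ((tap_guard L q j t.1 hj).mp hc)), if_neg h, mul_zero]

lemma QF_coeff_slot (L : ℕ) (hL : 0 < L) (m : ℕ) (F : ℕ → ℕ → ℝ) (a j : ℕ) (hj : j < L) :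
    (QF L m F).coeff (a*L + j) = if a < m then F a j else 0 := by
  rw [QF_coeff L hL, (slot_div L a j hL hj).1, (slot_div L a j hL hj).2]
  congr 1
  simp only [eq_iff_iff]
  constructor
  · intro h
    by_contra hc
    push_neg at hc
    have := Nat.mul_le_mul_right L hc
    omega
  · intro h
    have h2 : a + 1 ≤ m := h
    have := Nat.mul_le_mul_right L h2
    rw [Nat.succ_mul] at this
    omega

lemma mask_zero (v Q : ℝ[X]) (B : ℝ) (h : ∀ k, |Q.coeff k| ≤ B) (i : ℕ) (c : ℝ)
    (hc : c = -(pnorm v * B)) : relu ((v*Q).coeff i + c) = 0 := by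
  apply relu_of_nonpos
  have := coeff_mul_bound v Q B h i
  rw [hc]
  cases abs_le.mp this
  linarith

-- natDegree of tapPoly for a two/three tap filter with leading coeff 1
lemma tapPoly_natDegree_le (L : ℕ) (ts : List (ℕ × ℝ)) (R : ℕ) (h : ∀ t ∈ ts, t.1 * L ≤ R) :
    (tapPoly L ts).natDegree ≤ R := by
  induction ts with
  | nil => simp [tapPoly]
  | cons t ts ih =>
    have heq : tapPoly L (t :: ts) = C t.2 * X^(t.1*L) + tapPoly L ts := by simp [tapPoly]
    rw [heq]
    apply le_trans (Polynomial.natDegree_add_le _ _)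
    apply max_le
    · exact le_trans (Polynomial.natDegree_C_mul_X_pow_le _ _) (h t (by simp))
    · exact ih (fun u hu => h u (by simp [hu]))

lemma tapPoly_coeff (L : ℕ) (ts : List (ℕ × ℝ)) (k : ℕ) :
    (tapPoly L ts).coeff k = (ts.map fun t => if k = t.1*L then t.2 else 0).sum := by
  induction ts with
  | nil => simp [tapPoly]
  | cons t ts ih =>
    have heq : tapPoly L (t :: ts) = C t.2 * X^(t.1*L) + tapPoly L ts := by simp [tapPoly]
    rw [heq, Polynomial.coeff_add, ih]
    simp only [List.map_cons, List.sum_cons]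
    congr 1
    rw [Polynomial.coeff_C_mul, Polynomial.coeff_X_pow]
    split <;> simp

lemma tap_QF_coeff (L : ℕ) (hL : 0 < L) (ts : List (ℕ × ℝ)) (m : ℕ) (F : ℕ → ℕ → ℝ)
    (q j : ℕ) (hj : j < L) :
    ((tapPoly L ts) * QF L m F).coeff (q*L+j) =
      (ts.map fun t => if t.1 ≤ q ∧ q - t.1 < m then t.2 * F (q - t.1) j else 0).sum := by
  rw [tapPoly_mul_coeff L hL ts _ q j hj]
  congr 1
  apply List.map_congr_left
  intro t _
  by_cases h1 : t.1 ≤ q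
  · rw [if_pos h1, QF_coeff_slot L hL m F _ j hj]
    by_cases h2 : q - t.1 < m
    · rw [if_pos h2, if_pos ⟨h1, h2⟩]
    · rw [if_neg h2, if_neg (by tauto), mul_zero]
  · rw [if_neg h1, if_neg (by tauto)]

-- state functions
def Fst (g : ℕ → ℝ) (i : ℕ) : ℕ → ℕ → ℝ := fun q j =>
  if q = 3*i+1 then g j else if q = 3*i+3 then RU i (g j)
  else if q = 3*i+5 then T1^[i] (g j) else 0

def FstA (g : ℕ → ℝ) (i : ℕ) : ℕ → ℕ → ℝ := fun q j =>
  if q = 3*i+1 then g j else if q = 3*i+3 then RU i (g j)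
  else if q = 3*i+5 then relu (T1^[i] (g j) - 1/2)
  else if q = 3*i+6 then 2 * T1^[i] (g j) else 0

def FstB (g : ℕ → ℝ) (i : ℕ) : ℕ → ℕ → ℝ := fun q j =>
  if q = 3*i+1 then g j else if q = 3*i+3 then RU i (g j)
  else if q = 3*i+6 then T1^[i+1] (g j) else 0

def F0 (g : ℕ → ℝ) : ℕ → ℕ → ℝ := fun q j => if q = 0 then g j else 0

def Ffin (g : ℕ → ℝ) (U : ℕ) : ℕ → ℕ → ℝ := fun q j =>
  if q = 3*U+3 then RU U (g j) else if q = 3*U+11 then g j else 0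

section bounds
variable {g : ℕ → ℝ} (hg : ∀ j, g j ∈ Set.Icc (0:ℝ) 1)
include hg

lemma Fst_bound (i : ℕ) : ∀ q j, |Fst g i q j| ≤ 2 := by
  intro q j
  have h1 := hg j
  have h2 := RU_nonneg h1 i
  have h3 := RU_le h1 i
  have h4 := T1_iter_mem h1 i
  unfold Fst
  split_ifs <;> rw [abs_le] <;> constructor <;>
    first
    | linarith [h1.1, h1.2, h4.1, h4.2]
    | norm_num

lemma FstA_bound (i : ℕ) : ∀ q j, |FstA g i q j| ≤ 2 := by
  intro q j
  have h1 := hg j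
  have h2 := RU_nonneg h1 i
  have h3 := RU_le h1 i
  have h4 := T1_iter_mem h1 i
  have h5 : relu (T1^[i] (g j) - 1/2) ≤ 1 := by
    unfold relu
    apply max_le <;> linarith [h4.2]
  have h6 := relu_nonneg (T1^[i] (g j) - 1/2)
  unfold FstA
  split_ifs <;> rw [abs_le] <;> constructor <;>
    first
    | linarith [h1.1, h1.2, h4.1, h4.2]
    | norm_num

lemma FstB_bound (i : ℕ) : ∀ q j, |FstB g i q j| ≤ 2 := by
  intro q j
  have h1 := hg j
  have h2 := RU_nonneg h1 i
  have h3 := RU_le h1 i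
  have h4 := T1_iter_mem h1 (i+1)
  unfold FstB
  split_ifs <;> rw [abs_le] <;> constructor <;>
    first
    | linarith [h1.1, h1.2, h4.1, h4.2]
    | norm_num

lemma F0_bound : ∀ q j, |F0 g q j| ≤ 2 := by
  intro q j
  have h1 := hg j
  unfold F0
  split_ifs <;> rw [abs_le] <;> constructor <;> first | linarith [h1.1, h1.2] | norm_num

end bounds

-- degree facts for two/three-tap filters
lemma tap2_facts (L : ℕ) (hL : 0 < L) (r0 r1 : ℕ) (h01 : r0 < r1) (a c : ℝ) (hc : c ≠ 0) :
    (tapPoly L [(r0,a),(r1,c)]).natDegree = r1 * L ∧ tapPoly L [(r0,a),(r1,c)] ≠ 0 := by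
  have e0 : ¬ (r1*L = r0*L) := by
    intro h
    have := Nat.eq_of_mul_eq_mul_right hL h
    omega
  have hcoeff : (tapPoly L [(r0,a),(r1,c)]).coeff (r1*L) = c := by
    rw [tapPoly_coeff]
    simp only [List.map_cons, List.map_nil, List.sum_cons, List.sum_nil, add_zero]
    rw [if_neg e0]
    norm_num
  have hne : tapPoly L [(r0,a),(r1,c)] ≠ 0 :=
    fun h => hc (by rw [h] at hcoeff; simpa using hcoeff.symm)
  refine ⟨le_antisymm ?_ ?_, hne⟩
  · apply tapPoly_natDegree_le
    intro t ht
    simp only [List.mem_cons, List.not_mem_nil, or_false] at ht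
    rcases ht with h | h
    · simp only [h]
      exact Nat.mul_le_mul_right L (by omega)
    · simp [h]
  · exact Polynomial.le_natDegree_of_ne_zero (by rw [hcoeff]; exact hc)

lemma tap3_facts (L : ℕ) (hL : 0 < L) (r0 r1 r2 : ℕ) (h01 : r0 < r1) (h12 : r1 < r2)
    (a c1 c2 : ℝ) (hc : c2 ≠ 0) :
    (tapPoly L [(r0,a),(r1,c1),(r2,c2)]).natDegree = r2 * L ∧
      tapPoly L [(r0,a),(r1,c1),(r2,c2)] ≠ 0 := by
  have e0 : ¬ (r2*L = r0*L) := by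
    intro h
    have := Nat.eq_of_mul_eq_mul_right hL h
    omega
  have hne1 : ¬ (r2 * L = r1 * L) := by
    intro h
    have := Nat.eq_of_mul_eq_mul_right hL h
    omega
  have hcoeff : (tapPoly L [(r0,a),(r1,c1),(r2,c2)]).coeff (r2*L) = c2 := by
    rw [tapPoly_coeff]
    simp only [List.map_cons, List.map_nil, List.sum_cons, List.sum_nil, add_zero]
    rw [if_neg e0, if_neg hne1]
    norm_num
  have hne : tapPoly L [(r0,a),(r1,c1),(r2,c2)] ≠ 0 :=
    fun h => hc (by rw [h] at hcoeff; simpa using hcoeff.symm)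
  refine ⟨le_antisymm ?_ ?_, hne⟩
  · apply tapPoly_natDegree_le
    intro t ht
    simp only [List.mem_cons, List.not_mem_nil, or_false] at ht
    rcases ht with h | h | h
    · simp only [h]
      exact Nat.mul_le_mul_right L (by omega)
    · simp only [h]
      exact Nat.mul_le_mul_right L (by omega)
    · simp [h]
  · exact Polynomial.le_natDegree_of_ne_zero (by rw [hcoeff]; exact hc)

-- eval lemmas for state functions
section evals
variable (g : ℕ → ℝ) (i j : ℕ)

lemma Fst_at1 : Fst g i (3*i+1) j = g j := if_pos rfl
lemma Fst_at3 : Fst g i (3*i+3) j = RU i (g j) := by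
  unfold Fst; rw [if_neg (by omega)]; exact if_pos rfl
lemma Fst_at5 : Fst g i (3*i+5) j = T1^[i] (g j) := by
  unfold Fst; rw [if_neg (by omega), if_neg (by omega)]; exact if_pos rfl
lemma Fst_eq0 (q : ℕ) (h1 : q ≠ 3*i+1) (h2 : q ≠ 3*i+3) (h3 : q ≠ 3*i+5) :
    Fst g i q j = 0 := by
  unfold Fst; rw [if_neg h1, if_neg h2, if_neg h3]

lemma FstA_at1 : FstA g i (3*i+1) j = g j := if_pos rfl
lemma FstA_at3 : FstA g i (3*i+3) j = RU i (g j) := by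
  unfold FstA; rw [if_neg (by omega)]; exact if_pos rfl
lemma FstA_at5 : FstA g i (3*i+5) j = relu (T1^[i] (g j) - 1/2) := by
  unfold FstA; rw [if_neg (by omega), if_neg (by omega)]; exact if_pos rfl
lemma FstA_at6 : FstA g i (3*i+6) j = 2 * T1^[i] (g j) := by
  unfold FstA; rw [if_neg (by omega), if_neg (by omega), if_neg (by omega)]; exact if_pos rfl
lemma FstA_eq0 (q : ℕ) (h1 : q ≠ 3*i+1) (h2 : q ≠ 3*i+3) (h3 : q ≠ 3*i+5) (h4 : q ≠ 3*i+6) :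
    FstA g i q j = 0 := by
  unfold FstA; rw [if_neg h1, if_neg h2, if_neg h3, if_neg h4]

lemma FstB_at1 : FstB g i (3*i+1) j = g j := if_pos rfl
lemma FstB_at3 : FstB g i (3*i+3) j = RU i (g j) := by
  unfold FstB; rw [if_neg (by omega)]; exact if_pos rfl
lemma FstB_at6 : FstB g i (3*i+6) j = T1^[i+1] (g j) := by
  unfold FstB; rw [if_neg (by omega), if_neg (by omega)]; exact if_pos rfl
lemma FstB_eq0 (q : ℕ) (h1 : q ≠ 3*i+1) (h2 : q ≠ 3*i+3) (h3 : q ≠ 3*i+6) :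
    FstB g i q j = 0 := by
  unfold FstB; rw [if_neg h1, if_neg h2, if_neg h3]

lemma F0_at0 : F0 g 0 j = g j := if_pos rfl
lemma F0_eq0 (q : ℕ) (h1 : q ≠ 0) : F0 g q j = 0 := by
  unfold F0; rw [if_neg h1]

lemma Ffin_at3 (U : ℕ) : Ffin g U (3*U+3) j = RU U (g j) := if_pos rfl
lemma Ffin_at11 (U : ℕ) : Ffin g U (3*U+11) j = g j := by
  unfold Ffin; rw [if_neg (by omega)]; exact if_pos rfl
lemma Ffin_eq0 (U : ℕ) (q : ℕ) (h1 : q ≠ 3*U+3) (h2 : q ≠ 3*U+11) : Ffin g U q j = 0 := by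
  unfold Ffin; rw [if_neg h1, if_neg h2]

end evals

lemma step_alpha (s : ℕ) (hs : 2 ≤ s) (L : ℕ) (hL : 0 < L) (i n : ℕ) (hn : 0 < n)
    (hmn : (3*i+6)*L ≤ n) :
    ∃ (ps : List ((Fin (s + 1) → ℝ) × (ℕ → ℝ))) (p : ℕ),
      ps.length = p ∧ 1 ≤ p ∧ (p-1)*(s-1) ≤ L ∧ L ≤ p*s ∧ (3*i+7)*L ≤ n + p*s ∧
      ∀ g : ℕ → ℝ, (∀ j, g j ∈ Set.Icc (0:ℝ) 1) →
        applyCNN s ps n (stateOf n (QF L (3*i+6) (Fst g i)) 0)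
          = stateOf (n + p*s) (QF L (3*i+7) (FstA g i)) 0 := by
  obtain ⟨hdeg, hvne⟩ := tap2_facts L hL 0 1 (by omega) 1 2 two_ne_zero
  set v : ℝ[X] := tapPoly L [(0,(1:ℝ)),(1,2)] with hv
  set gβ : ℕ → ℝ := fun q => if q = 3*i+5 then -(1/2)
    else if q = 3*i+1 ∨ q = 3*i+3 ∨ q = 3*i+6 then 0 else -(pnorm v * 2) with hgβ
  obtain ⟨ps, p, hl, h1, h3, h4, h5, hsem⟩ := macro_step s hs L hL v hvne n (3*i+6) (3*i+7)
    hn hmn (by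
      rw [hdeg]
      have : (3*i+7)*L = (3*i+6)*L + 1*L := by ring
      omega) gβ
  rw [hdeg] at h3 h4
  refine ⟨ps, p, hl, h1, by simpa using h3, by simpa using h4, h5, ?_⟩
  intro g hg
  refine hsem (Fst g i) (FstA g i) (Fst_bound hg i) ?_ ?_
  case refine_2 =>
    intro q j hq
    exact FstA_eq0 g i j q (by omega) (by omega) (by omega) (by omega)
  · -- H1
    intro q j hjL
    rw [tap_QF_coeff L hL _ _ _ q j hjL]
    simp only [List.map_cons, List.map_nil, List.sum_cons, List.sum_nil, add_zero,
      Nat.sub_zero]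
    have hgj := hg j
    have hT := T1_iter_mem hgj i
    have hR1 := RU_nonneg hgj i
    by_cases hqa : q = 3*i+1
    · subst hqa
      rw [if_pos (show 0 ≤ 3*i+1 ∧ 3*i+1 < 3*i+6 by omega),
        if_pos (show 1 ≤ 3*i+1 ∧ 3*i+1-1 < 3*i+6 by omega),
        show 3*i+1-1 = 3*i by omega, Fst_at1,
        Fst_eq0 g i j (3*i) (by omega) (by omega) (by omega),
        show gβ (3*i+1) = 0 by
          simp only [hgβ]
          rw [if_neg (show ¬(3*i+1 = 3*i+5) by omega)]
          simp,
        FstA_at1, show (1:ℝ) * g j + 2 * 0 + 0 = g j by ring]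
      exact relu_of_nonneg hgj.1
    · by_cases hqb : q = 3*i+3
      · subst hqb
        rw [if_pos (show 0 ≤ 3*i+3 ∧ 3*i+3 < 3*i+6 by omega),
          if_pos (show 1 ≤ 3*i+3 ∧ 3*i+3-1 < 3*i+6 by omega),
          show 3*i+3-1 = 3*i+2 by omega, Fst_at3,
          Fst_eq0 g i j (3*i+2) (by omega) (by omega) (by omega),
          show gβ (3*i+3) = 0 by
            simp only [hgβ]
            rw [if_neg (show ¬(3*i+3 = 3*i+5) by omega)]
            simp,
          FstA_at3, show (1:ℝ) * RU i (g j) + 2 * 0 + 0 = RU i (g j) by ring]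
        exact relu_of_nonneg hR1
      · by_cases hqc : q = 3*i+5
        · subst hqc
          rw [if_pos (show 0 ≤ 3*i+5 ∧ 3*i+5 < 3*i+6 by omega),
            if_pos (show 1 ≤ 3*i+5 ∧ 3*i+5-1 < 3*i+6 by omega),
            show 3*i+5-1 = 3*i+4 by omega, Fst_at5,
            Fst_eq0 g i j (3*i+4) (by omega) (by omega) (by omega),
            show gβ (3*i+5) = -(1/2) by simp only [hgβ]; norm_num,
            FstA_at5]
          congr 1
          ring
        · by_cases hqd : q = 3*i+6
          · subst hqd
            rw [if_neg (show ¬(0 ≤ 3*i+6 ∧ 3*i+6 < 3*i+6) by omega),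
              if_pos (show 1 ≤ 3*i+6 ∧ 3*i+6-1 < 3*i+6 by omega),
              show 3*i+6-1 = 3*i+5 by omega, Fst_at5,
              show gβ (3*i+6) = 0 by
                simp only [hgβ]
                rw [if_neg (show ¬(3*i+6 = 3*i+5) by omega)]
                simp,
              FstA_at6, show (0:ℝ) + 2 * T1^[i] (g j) + 0 = 2 * T1^[i] (g j) by ring]
            exact relu_of_nonneg (by linarith [hT.1])
          · -- masked
            rw [FstA_eq0 g i j q hqa hqb hqc hqd,
              show (if 0 ≤ q ∧ q < 3*i+6 then 1 * Fst g i q j else 0) +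
                (if 1 ≤ q ∧ q - 1 < 3*i+6 then 2 * Fst g i (q-1) j else 0)
                = (v * QF L (3*i+6) (Fst g i)).coeff (q*L+j) by
                rw [tap_QF_coeff L hL _ _ _ q j hjL]
                simp only [List.map_cons, List.map_nil, List.sum_cons, List.sum_nil,
                  add_zero, Nat.sub_zero]]
            apply mask_zero v _ 2
              (QF_coeff_bound L hL _ _ 2 (by norm_num) (Fst_bound hg i))
            simp only [hgβ]
            rw [if_neg hqc, if_neg (by tauto)]

lemma step_beta (s : ℕ) (hs : 2 ≤ s) (L : ℕ) (hL : 0 < L) (i n : ℕ) (hn : 0 < n)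
    (hmn : (3*i+7)*L ≤ n) :
    ∃ (ps : List ((Fin (s + 1) → ℝ) × (ℕ → ℝ))) (p : ℕ),
      ps.length = p ∧ 1 ≤ p ∧ (p-1)*(s-1) ≤ L ∧ L ≤ p*s ∧ (3*i+7)*L ≤ n + p*s ∧
      ∀ g : ℕ → ℝ, (∀ j, g j ∈ Set.Icc (0:ℝ) 1) →
        applyCNN s ps n (stateOf n (QF L (3*i+7) (FstA g i)) 0)
          = stateOf (n + p*s) (QF L (3*i+7) (FstB g i)) 0 := by
  obtain ⟨hdeg, hvne⟩ := tap2_facts L hL 0 1 (by omega) 1 (-4) (by norm_num)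
  set v : ℝ[X] := tapPoly L [(0,(1:ℝ)),(1,-4)] with hv
  set gβ : ℕ → ℝ := fun q =>
    if q = 3*i+1 ∨ q = 3*i+3 ∨ q = 3*i+6 then 0 else -(pnorm v * 2) with hgβ
  obtain ⟨ps, p, hl, h1, h3, h4, h5, hsem⟩ := macro_step s hs L hL v hvne n (3*i+7) (3*i+7)
    hn hmn (by omega) gβ
  rw [hdeg] at h3 h4
  refine ⟨ps, p, hl, h1, by simpa using h3, by simpa using h4, h5, ?_⟩
  intro g hg
  refine hsem (FstA g i) (FstB g i) (FstA_bound hg i) ?_ ?_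
  case refine_2 =>
    intro q j hq
    exact FstB_eq0 g i j q (by omega) (by omega) (by omega)
  · -- H1
    intro q j hjL
    rw [tap_QF_coeff L hL _ _ _ q j hjL]
    simp only [List.map_cons, List.map_nil, List.sum_cons, List.sum_nil, add_zero,
      Nat.sub_zero]
    have hgj := hg j
    have hT := T1_iter_mem hgj i
    have hR1 := RU_nonneg hgj i
    by_cases hqa : q = 3*i+1
    · subst hqa
      rw [if_pos (show 0 ≤ 3*i+1 ∧ 3*i+1 < 3*i+7 by omega),
        if_pos (show 1 ≤ 3*i+1 ∧ 3*i+1-1 < 3*i+7 by omega),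
        show 3*i+1-1 = 3*i by omega, FstA_at1,
        FstA_eq0 g i j (3*i) (by omega) (by omega) (by omega) (by omega),
        show gβ (3*i+1) = 0 by simp only [hgβ]; simp,
        FstB_at1, show (1:ℝ) * g j + -4 * 0 + 0 = g j by ring]
      exact relu_of_nonneg hgj.1
    · by_cases hqb : q = 3*i+3
      · subst hqb
        rw [if_pos (show 0 ≤ 3*i+3 ∧ 3*i+3 < 3*i+7 by omega),
          if_pos (show 1 ≤ 3*i+3 ∧ 3*i+3-1 < 3*i+7 by omega),
          show 3*i+3-1 = 3*i+2 by omega, FstA_at3,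
          FstA_eq0 g i j (3*i+2) (by omega) (by omega) (by omega) (by omega),
          show gβ (3*i+3) = 0 by
            simp only [hgβ]
            simp,
          FstB_at3, show (1:ℝ) * RU i (g j) + -4 * 0 + 0 = RU i (g j) by ring]
        exact relu_of_nonneg hR1
      · by_cases hqc : q = 3*i+6
        · subst hqc
          rw [if_pos (show 0 ≤ 3*i+6 ∧ 3*i+6 < 3*i+7 by omega),
            if_pos (show 1 ≤ 3*i+6 ∧ 3*i+6-1 < 3*i+7 by omega),
            show 3*i+6-1 = 3*i+5 by omega, FstA_at6, FstA_at5,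
            show gβ (3*i+6) = 0 by
              simp only [hgβ]
              simp,
            FstB_at6,
            show (1:ℝ) * (2 * T1^[i] (g j)) + -4 * relu (T1^[i] (g j) - 1/2) + 0
              = 2 * T1^[i] (g j) - 4 * relu (T1^[i] (g j) - 1/2) by ring,
            T1_eval hT, Function.iterate_succ_apply' T1 i (g j)]
        · -- masked
          rw [FstB_eq0 g i j q hqa hqb hqc,
            show (if 0 ≤ q ∧ q < 3*i+7 then 1 * FstA g i q j else 0) +
              (if 1 ≤ q ∧ q - 1 < 3*i+7 then -4 * FstA g i (q-1) j else 0)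
              = (v * QF L (3*i+7) (FstA g i)).coeff (q*L+j) by
              rw [tap_QF_coeff L hL _ _ _ q j hjL]
              simp only [List.map_cons, List.map_nil, List.sum_cons, List.sum_nil,
                add_zero, Nat.sub_zero]]
          apply mask_zero v _ 2
            (QF_coeff_bound L hL _ _ 2 (by norm_num) (FstA_bound hg i))
          simp only [hgβ]
          rw [if_neg (by tauto)]

lemma step_gamma (s : ℕ) (hs : 2 ≤ s) (L : ℕ) (hL : 0 < L) (i n : ℕ) (hn : 0 < n)
    (hmn : (3*i+7)*L ≤ n) :
    ∃ (ps : List ((Fin (s + 1) → ℝ) × (ℕ → ℝ))) (p : ℕ),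
      ps.length = p ∧ 1 ≤ p ∧ (p-1)*(s-1) ≤ 3*L ∧ 3*L ≤ p*s ∧ (3*(i+1)+6)*L ≤ n + p*s ∧
      ∀ g : ℕ → ℝ, (∀ j, g j ∈ Set.Icc (0:ℝ) 1) →
        applyCNN s ps n (stateOf n (QF L (3*i+7) (FstB g i)) 0)
          = stateOf (n + p*s) (QF L (3*(i+1)+6) (Fst g (i+1))) 0 := by
  set c : ℝ := -((1/4:ℝ)^(i+1)) with hc
  obtain ⟨hdeg, hvne⟩ := tap3_facts L hL 0 2 3 (by omega) (by omega) c 1 1 one_ne_zero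
  set v : ℝ[X] := tapPoly L [(0,c),(2,(1:ℝ)),(3,1)] with hv
  set gβ : ℕ → ℝ := fun q =>
    if q = 3*i+4 ∨ q = 3*i+6 ∨ q = 3*i+8 then 0 else -(pnorm v * 2) with hgβ
  obtain ⟨ps, p, hl, h1, h3, h4, h5, hsem⟩ := macro_step s hs L hL v hvne n (3*i+7) (3*(i+1)+6)
    hn hmn (by
      rw [hdeg]
      have : (3*(i+1)+6)*L = (3*i+7)*L + 2*L := by ring
      have h2 : 2*L ≤ 3*L := by omega
      omega) gβ
  rw [hdeg] at h3 h4
  refine ⟨ps, p, hl, h1, h3, h4, h5, ?_⟩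
  intro g hg
  refine hsem (FstB g i) (Fst g (i+1)) (FstB_bound hg i) ?_ ?_
  case refine_2 =>
    intro q j hq
    exact Fst_eq0 g (i+1) j q (by omega) (by omega) (by omega)
  · -- H1
    intro q j hjL
    rw [tap_QF_coeff L hL _ _ _ q j hjL]
    simp only [List.map_cons, List.map_nil, List.sum_cons, List.sum_nil, add_zero,
      Nat.sub_zero]
    have hgj := hg j
    have hT := T1_iter_mem hgj (i+1)
    by_cases hqa : q = 3*i+4
    · subst hqa
      rw [if_pos (show 0 ≤ 3*i+4 ∧ 3*i+4 < 3*i+7 by omega),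
        if_pos (show 2 ≤ 3*i+4 ∧ 3*i+4-2 < 3*i+7 by omega),
        if_pos (show 3 ≤ 3*i+4 ∧ 3*i+4-3 < 3*i+7 by omega),
        show 3*i+4-2 = 3*i+2 by omega, show 3*i+4-3 = 3*i+1 by omega,
        FstB_at1,
        FstB_eq0 g i j (3*i+4) (by omega) (by omega) (by omega),
        FstB_eq0 g i j (3*i+2) (by omega) (by omega) (by omega),
        show gβ (3*i+4) = 0 by simp only [hgβ]; simp,
        show Fst g (i+1) (3*i+4) j = g j from Fst_at1 g (i+1) j,
        show c * 0 + (1 * 0 + 1 * g j) + 0 = g j by ring]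
      exact relu_of_nonneg hgj.1
    · by_cases hqb : q = 3*i+6
      · subst hqb
        rw [if_pos (show 0 ≤ 3*i+6 ∧ 3*i+6 < 3*i+7 by omega),
          if_pos (show 2 ≤ 3*i+6 ∧ 3*i+6-2 < 3*i+7 by omega),
          if_pos (show 3 ≤ 3*i+6 ∧ 3*i+6-3 < 3*i+7 by omega),
          show 3*i+6-2 = 3*i+4 by omega, show 3*i+6-3 = 3*i+3 by omega,
          FstB_at3, FstB_at6,
          FstB_eq0 g i j (3*i+4) (by omega) (by omega) (by omega),
          show gβ (3*i+6) = 0 by simp only [hgβ]; simp,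
          show Fst g (i+1) (3*i+6) j = RU (i+1) (g j) from Fst_at3 g (i+1) j,
          show c * T1^[i+1] (g j) + (1 * 0 + 1 * RU i (g j)) + 0
            = RU i (g j) - T1^[i+1] (g j) / 4^(i+1) by rw [hc, one_div, inv_pow]; ring,
          ← RU_succ]
        exact relu_of_nonneg (RU_nonneg hgj (i+1))
      · by_cases hqc : q = 3*i+8
        · subst hqc
          rw [if_neg (show ¬(0 ≤ 3*i+8 ∧ 3*i+8 < 3*i+7) by omega),
            if_pos (show 2 ≤ 3*i+8 ∧ 3*i+8-2 < 3*i+7 by omega),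
            if_pos (show 3 ≤ 3*i+8 ∧ 3*i+8-3 < 3*i+7 by omega),
            show 3*i+8-2 = 3*i+6 by omega, show 3*i+8-3 = 3*i+5 by omega,
            FstB_at6,
            FstB_eq0 g i j (3*i+5) (by omega) (by omega) (by omega),
            show gβ (3*i+8) = 0 by simp only [hgβ]; simp,
            show Fst g (i+1) (3*i+8) j = T1^[i+1] (g j) from Fst_at5 g (i+1) j,
            show (0:ℝ) + (1 * T1^[i+1] (g j) + 1 * 0) + 0 = T1^[i+1] (g j) by ring]
          exact relu_of_nonneg hT.1
        · -- masked
          rw [Fst_eq0 g (i+1) j q (by omega) (by omega) (by omega),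
            show (if 0 ≤ q ∧ q < 3*i+7 then c * FstB g i q j else 0) +
              ((if 2 ≤ q ∧ q - 2 < 3*i+7 then 1 * FstB g i (q-2) j else 0) +
               (if 3 ≤ q ∧ q - 3 < 3*i+7 then 1 * FstB g i (q-3) j else 0))
              = (v * QF L (3*i+7) (FstB g i)).coeff (q*L+j) by
              rw [tap_QF_coeff L hL _ _ _ q j hjL]
              simp only [List.map_cons, List.map_nil, List.sum_cons, List.sum_nil,
                add_zero, Nat.sub_zero]]
          apply mask_zero v _ 2
            (QF_coeff_bound L hL _ _ 2 (by norm_num) (FstB_bound hg i))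
          simp only [hgβ]
          rw [if_neg (by tauto)]

lemma step_setup (s : ℕ) (hs : 2 ≤ s) (L : ℕ) (hL : 0 < L) (n : ℕ) (hn : 0 < n)
    (hmn : 1*L ≤ n) :
    ∃ (ps : List ((Fin (s + 1) → ℝ) × (ℕ → ℝ))) (p : ℕ),
      ps.length = p ∧ 1 ≤ p ∧ (p-1)*(s-1) ≤ 5*L ∧ 5*L ≤ p*s ∧ (3*0+6)*L ≤ n + p*s ∧
      ∀ g : ℕ → ℝ, (∀ j, g j ∈ Set.Icc (0:ℝ) 1) →
        applyCNN s ps n (stateOf n (QF L 1 (F0 g)) 0)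
          = stateOf (n + p*s) (QF L (3*0+6) (Fst g 0)) 0 := by
  obtain ⟨hdeg, hvne⟩ := tap3_facts L hL 1 3 5 (by omega) (by omega) 1 1 1 one_ne_zero
  set v : ℝ[X] := tapPoly L [(1,(1:ℝ)),(3,1),(5,1)] with hv
  set gβ : ℕ → ℝ := fun q =>
    if q = 1 ∨ q = 3 ∨ q = 5 then 0 else -(pnorm v * 2) with hgβ
  obtain ⟨ps, p, hl, h1, h3, h4, h5, hsem⟩ := macro_step s hs L hL v hvne n 1 (3*0+6)
    hn hmn (by
      rw [hdeg]
      have : (3*0+6)*L = 1*L + 5*L := by ring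
      have h2 : 5*L ≤ 5*L := le_refl _
      omega) gβ
  rw [hdeg] at h3 h4
  refine ⟨ps, p, hl, h1, h3, h4, h5, ?_⟩
  intro g hg
  refine hsem (F0 g) (Fst g 0) (F0_bound hg) ?_ ?_
  case refine_2 =>
    intro q j hq
    exact Fst_eq0 g 0 j q (by omega) (by omega) (by omega)
  · -- H1
    intro q j hjL
    rw [tap_QF_coeff L hL _ _ _ q j hjL]
    simp only [List.map_cons, List.map_nil, List.sum_cons, List.sum_nil, add_zero]
    have hgj := hg j
    by_cases hqa : q = 1
    · subst hqa
      rw [if_pos (show 1 ≤ 1 ∧ 1-1 < 1 by omega),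
        if_neg (show ¬(3 ≤ 1 ∧ 1-3 < 1) by omega),
        if_neg (show ¬(5 ≤ 1 ∧ 1-5 < 1) by omega),
        show (1:ℕ)-1 = 0 by omega, F0_at0,
        show gβ 1 = 0 by simp only [hgβ]; simp,
        show Fst g 0 1 j = g j from Fst_at1 g 0 j,
        show (1:ℝ) * g j + (0 + 0) + 0 = g j by ring]
      exact relu_of_nonneg hgj.1
    · by_cases hqb : q = 3
      · subst hqb
        rw [if_neg (show ¬(1 ≤ 3 ∧ 3-1 < 1) by omega),
          if_pos (show 3 ≤ 3 ∧ 3-3 < 1 by omega),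
          if_neg (show ¬(5 ≤ 3 ∧ 3-5 < 1) by omega),
          show (3:ℕ)-3 = 0 by omega, F0_at0,
          show gβ 3 = 0 by simp only [hgβ]; simp,
          show Fst g 0 3 j = RU 0 (g j) from Fst_at3 g 0 j, RU_zero,
          show (0:ℝ) + (1 * g j + 0) + 0 = g j by ring]
        exact relu_of_nonneg hgj.1
      · by_cases hqc : q = 5
        · subst hqc
          rw [if_neg (show ¬(1 ≤ 5 ∧ 5-1 < 1) by omega),
            if_neg (show ¬(3 ≤ 5 ∧ 5-3 < 1) by omega),
            if_pos (show 5 ≤ 5 ∧ 5-5 < 1 by omega),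
            show (5:ℕ)-5 = 0 by omega, F0_at0,
            show gβ 5 = 0 by simp only [hgβ]; simp,
            show Fst g 0 5 j = T1^[0] (g j) from Fst_at5 g 0 j,
            Function.iterate_zero_apply,
            show (0:ℝ) + (0 + 1 * g j) + 0 = g j by ring]
          exact relu_of_nonneg hgj.1
        · -- masked
          rw [Fst_eq0 g 0 j q (by omega) (by omega) (by omega),
            show (if 1 ≤ q ∧ q - 1 < 1 then 1 * F0 g (q-1) j else 0) +
              ((if 3 ≤ q ∧ q - 3 < 1 then 1 * F0 g (q-3) j else 0) +
               (if 5 ≤ q ∧ q - 5 < 1 then 1 * F0 g (q-5) j else 0))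
              = (v * QF L 1 (F0 g)).coeff (q*L+j) by
              rw [tap_QF_coeff L hL _ _ _ q j hjL]
              simp only [List.map_cons, List.map_nil, List.sum_cons, List.sum_nil,
                add_zero]]
          apply mask_zero v _ 2
            (QF_coeff_bound L hL _ _ 2 (by norm_num) (F0_bound hg))
          simp only [hgβ]
          rw [if_neg (by tauto)]

lemma step_fin (s : ℕ) (hs : 2 ≤ s) (L : ℕ) (hL : 0 < L) (U n : ℕ) (hn : 0 < n)
    (hmn : (3*U+6)*L ≤ n) :
    ∃ (ps : List ((Fin (s + 1) → ℝ) × (ℕ → ℝ))) (p : ℕ),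
      ps.length = p ∧ 1 ≤ p ∧ (p-1)*(s-1) ≤ 10*L ∧ 10*L ≤ p*s ∧ (3*U+12)*L ≤ n + p*s ∧
      ∀ g : ℕ → ℝ, (∀ j, g j ∈ Set.Icc (0:ℝ) 1) →
        applyCNN s ps n (stateOf n (QF L (3*U+6) (Fst g U)) 0)
          = stateOf (n + p*s) (QF L (3*U+12) (Ffin g U)) 0 := by
  obtain ⟨hdeg, hvne⟩ := tap2_facts L hL 0 10 (by omega) 1 1 one_ne_zero
  set v : ℝ[X] := tapPoly L [(0,(1:ℝ)),(10,1)] with hv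
  set gβ : ℕ → ℝ := fun q =>
    if q = 3*U+3 ∨ q = 3*U+11 then 0 else -(pnorm v * 2) with hgβ
  obtain ⟨ps, p, hl, h1, h3, h4, h5, hsem⟩ := macro_step s hs L hL v hvne n (3*U+6) (3*U+12)
    hn hmn (by
      rw [hdeg]
      have : (3*U+12)*L = (3*U+6)*L + 6*L := by ring
      have h2 : 6*L ≤ 10*L := by omega
      omega) gβ
  rw [hdeg] at h3 h4
  refine ⟨ps, p, hl, h1, h3, h4, h5, ?_⟩
  intro g hg
  refine hsem (Fst g U) (Ffin g U) (Fst_bound hg U) ?_ ?_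
  case refine_2 =>
    intro q j hq
    exact Ffin_eq0 g j U q (by omega) (by omega)
  · -- H1
    intro q j hjL
    rw [tap_QF_coeff L hL _ _ _ q j hjL]
    simp only [List.map_cons, List.map_nil, List.sum_cons, List.sum_nil, add_zero,
      Nat.sub_zero]
    have hgj := hg j
    have hR1 := RU_nonneg hgj U
    by_cases hqa : q = 3*U+3
    · subst hqa
      rw [if_pos (show 0 ≤ 3*U+3 ∧ 3*U+3 < 3*U+6 by omega),
        show Fst g U (3*U+3) j = RU U (g j) from Fst_at3 g U j,
        show gβ (3*U+3) = 0 by simp only [hgβ]; simp,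
        show Ffin g U (3*U+3) j = RU U (g j) from Ffin_at3 g j U]
      by_cases h10 : 10 ≤ 3*U+3 ∧ 3*U+3-10 < 3*U+6
      · rw [if_pos h10,
          Fst_eq0 g U j (3*U+3-10) (by omega) (by omega) (by omega),
          show (1:ℝ) * RU U (g j) + 1 * 0 + 0 = RU U (g j) by ring]
        exact relu_of_nonneg hR1
      · rw [if_neg h10, show (1:ℝ) * RU U (g j) + 0 + 0 = RU U (g j) by ring]
        exact relu_of_nonneg hR1
    · by_cases hqb : q = 3*U+11
      · subst hqb
        rw [if_neg (show ¬(0 ≤ 3*U+11 ∧ 3*U+11 < 3*U+6) by omega),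
          if_pos (show 10 ≤ 3*U+11 ∧ 3*U+11-10 < 3*U+6 by omega),
          show 3*U+11-10 = 3*U+1 by omega,
          show Fst g U (3*U+1) j = g j from Fst_at1 g U j,
          show gβ (3*U+11) = 0 by simp only [hgβ]; simp,
          show Ffin g U (3*U+11) j = g j from Ffin_at11 g j U,
          show (0:ℝ) + 1 * g j + 0 = g j by ring]
        exact relu_of_nonneg hgj.1
      · -- masked
        rw [Ffin_eq0 g j U q hqa hqb,
          show (if 0 ≤ q ∧ q < 3*U+6 then 1 * Fst g U q j else 0) +
            (if 10 ≤ q ∧ q - 10 < 3*U+6 then 1 * Fst g U (q-10) j else 0)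
            = (v * QF L (3*U+6) (Fst g U)).coeff (q*L+j) by
            rw [tap_QF_coeff L hL _ _ _ q j hjL]
            simp only [List.map_cons, List.map_nil, List.sum_cons, List.sum_nil,
              add_zero, Nat.sub_zero]]
        apply mask_zero v _ 2
          (QF_coeff_bound L hL _ _ 2 (by norm_num) (Fst_bound hg U))
        simp only [hgβ]
        rw [if_neg (by tauto)]

lemma add3_mul (a b c d : ℕ) : (a + b + c) * d = a*d + b*d + c*d := by ring

lemma step_iter (s : ℕ) (hs : 2 ≤ s) (L : ℕ) (hL : 0 < L) (i n : ℕ) (hn : 0 < n)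
    (hmn : (3*i+6)*L ≤ n) :
    ∃ (ps : List ((Fin (s + 1) → ℝ) × (ℕ → ℝ))) (J : ℕ),
      ps.length = J ∧ 3 ≤ J ∧ (J-3)*(s-1) ≤ 5*L ∧ (3*(i+1)+6)*L ≤ n + J*s ∧
      ∀ g : ℕ → ℝ, (∀ j, g j ∈ Set.Icc (0:ℝ) 1) →
        applyCNN s ps n (stateOf n (QF L (3*i+6) (Fst g i)) 0)
          = stateOf (n + J*s) (QF L (3*(i+1)+6) (Fst g (i+1))) 0 := by
  obtain ⟨psa, pa, hla, h1a, hca, hda, h5a, hsema⟩ := step_alpha s hs L hL i n hn hmn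
  obtain ⟨psb, pb, hlb, h1b, hcb, hdb, h5b, hsemb⟩ :=
    step_beta s hs L hL i (n + pa*s) (by omega) h5a
  obtain ⟨psc, pc, hlc, h1c, hcc, hdc, h5c, hsemc⟩ :=
    step_gamma s hs L hL i (n + pa*s + pb*s) (by omega) h5b
  refine ⟨psa ++ (psb ++ psc), pa + pb + pc, by simp [hla, hlb, hlc]; omega, by omega, ?_, ?_, ?_⟩
  · -- cost
    have ea : pa = (pa - 1) + 1 := by omega
    have eb : pb = (pb - 1) + 1 := by omega
    have ec : pc = (pc - 1) + 1 := by omega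
    have : (pa + pb + pc - 3) = (pa-1) + (pb-1) + (pc-1) := by omega
    rw [this, add3_mul]
    omega
  · have e : (pa+pb+pc)*s = pa*s + pb*s + pc*s := add3_mul pa pb pc s
    omega
  · intro g hg
    rw [applyCNN_append, hla, hsema g hg, applyCNN_append, hlb, hsemb g hg, hsemc g hg,
      show n + (pa+pb+pc)*s = n + pa*s + pb*s + pc*s by rw [add3_mul]; omega]

lemma step_iters (s : ℕ) (hs : 2 ≤ s) (L : ℕ) (hL : 0 < L) :
    ∀ (k i n : ℕ), 0 < n → (3*i+6)*L ≤ n →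
    ∃ (ps : List ((Fin (s + 1) → ℝ) × (ℕ → ℝ))) (J : ℕ),
      ps.length = J ∧ 3*k ≤ J ∧ (J-3*k)*(s-1) ≤ 5*k*L ∧ (3*(i+k)+6)*L ≤ n + J*s ∧
      ∀ g : ℕ → ℝ, (∀ j, g j ∈ Set.Icc (0:ℝ) 1) →
        applyCNN s ps n (stateOf n (QF L (3*i+6) (Fst g i)) 0)
          = stateOf (n + J*s) (QF L (3*(i+k)+6) (Fst g (i+k))) 0 := by
  intro k
  induction k with
  | zero =>
    intro i n hn hmn
    exact ⟨[], 0, rfl, by omega, by simp, by simpa using hmn, fun g hg => by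
      simp only [applyCNN, Nat.add_zero, Nat.zero_mul]⟩
  | succ k ih =>
    intro i n hn hmn
    obtain ⟨ps1, J1, hl1, h31, hc1, h51, hsem1⟩ := step_iter s hs L hL i n hn hmn
    obtain ⟨ps2, J2, hl2, h32, hc2, h52, hsem2⟩ := ih (i+1) (n + J1*s) (by omega) h51
    refine ⟨ps1 ++ ps2, J1 + J2, by simp [hl1, hl2], by omega, ?_, ?_, ?_⟩
    · have e1 : J1 + J2 - 3*(k+1) = (J1 - 3) + (J2 - 3*k) := by omega
      rw [e1, Nat.add_mul]
      have e2 : 5*(k+1)*L = 5*L + 5*k*L := by ring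
      omega
    · have e3 : 3*(i+(k+1)) = 3*((i+1)+k) := by ring
      have e5 : (J1+J2)*s = J1*s + J2*s := Nat.add_mul J1 J2 s
      rw [e3]
      omega
    · intro g hg
      rw [applyCNN_append, hl1, hsem1 g hg, hsem2 g hg,
        show n + (J1+J2)*s = n + J1*s + J2*s by rw [Nat.add_mul]; omega,
        show 3*(i+(k+1)) = 3*((i+1)+k) by ring, show i+(k+1) = (i+1)+k by ring]

theorem stmt11 (s : ℕ) (hs : 2 ≤ s) (L U : ℕ) (hL : 0 < L) (hU : 0 < U) :
    ∃ (J : ℕ) (ps : List ((Fin (s + 1) → ℝ) × (ℕ → ℝ))),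
      ps.length = J ∧
      (J : ℝ) ≤ (7 * U + 15) * L / ((s : ℝ) - 1) + 3 * U + 2 ∧
      ∃ n₁ n₂ : ℕ, n₁ + 9 * L + n₂ = L + J * s ∧
        ∀ y : Fin L → ℝ, (∀ j, y j ∈ Set.Icc (0 : ℝ) 1) →
          applyCNN s ps L (embed L y) = fun i =>
            if h : n₁ ≤ i ∧ i < n₁ + L then RU U (y ⟨i - n₁, by omega⟩)
            else if h' : n₁ + 8 * L ≤ i ∧ i < n₁ + 9 * L then y ⟨i - (n₁ + 8 * L), by omega⟩
            else 0 := by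
  obtain ⟨ps0, p0, hl0, hp0, hc0, hd0, hm0, hsem0⟩ :=
    step_setup s hs L hL L hL (by omega)
  obtain ⟨ps1, J1, hl1, h31, hc1, hm1, hsem1⟩ :=
    step_iters s hs L hL U 0 (L + p0*s) (by omega) hm0
  have hm1' : (3*U+6)*L ≤ L + p0*s + J1*s := by
    have := hm1
    simp only [Nat.zero_add] at this
    omega
  obtain ⟨ps2, p2, hl2, hp2, hc2, hd2, hm2, hsem2⟩ :=
    step_fin s hs L hL U (L + p0*s + J1*s) (by omega) hm1'
  set J : ℕ := p0 + J1 + p2 with hJdef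
  set n₁ : ℕ := (3*U+3)*L with hn₁
  have hJs : J * s = p0*s + J1*s + p2*s := add3_mul p0 J1 p2 s
  have hNfit : (3*U+12)*L ≤ L + J*s := by omega
  have hblocks : (3*U+12)*L = n₁ + 9*L := by rw [hn₁]; ring
  have h8 : (3*U+11)*L = n₁ + 8*L := by rw [hn₁]; ring
  have h4 : (3*U+4)*L = n₁ + L := by rw [hn₁]; ring
  refine ⟨J, ps0 ++ (ps1 ++ ps2), by simp [hl0, hl1, hl2, hJdef]; omega, ?_, n₁,
    (L + J*s) - (n₁ + 9*L), by omega, ?_⟩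
  · -- depth bound
    have hJge : 3*U+2 ≤ J := by omega
    have key : (J - (3*U+2))*(s-1) ≤ (5*U+15)*L := by
      have e : J - (3*U+2) = (p0-1) + (J1-3*U) + (p2-1) := by omega
      rw [e, add3_mul]
      have e2 : (5*U+15)*L = 5*L + 5*U*L + 10*L := by ring
      omega
    have hpos : (0:ℝ) < (s:ℝ) - 1 := by
      have : (2:ℝ) ≤ (s:ℝ) := by exact_mod_cast hs
      linarith
    have keyR : ((J:ℝ) - (3*U+2)) * ((s:ℝ) - 1) ≤ (5*U+15)*(L:ℝ) := by
      have h1 : ((J - (3*U+2) : ℕ) : ℝ) = (J:ℝ) - (3*U+2) := by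
        rw [Nat.cast_sub hJge]; push_cast; ring
      have h2 : (((s:ℕ) - 1 : ℕ) : ℝ) = (s:ℝ) - 1 := by
        rw [Nat.cast_sub (by omega)]; push_cast; ring
      calc ((J:ℝ) - (3*U+2)) * ((s:ℝ) - 1) = (((J - (3*U+2))*(s-1) : ℕ) : ℝ) := by
            rw [Nat.cast_mul, h1, h2]
        _ ≤ (((5*U+15)*L : ℕ) : ℝ) := by exact_mod_cast key
        _ = (5*U+15)*(L:ℝ) := by push_cast; ring
    have step1 : (J:ℝ) - (3*U+2) ≤ (5*U+15)*(L:ℝ) / ((s:ℝ) - 1) :=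
      (le_div_iff₀ hpos).mpr keyR
    have step2 : (5*U+15)*(L:ℝ) / ((s:ℝ) - 1) ≤ (7*U+15)*(L:ℝ) / ((s:ℝ) - 1) := by
      apply (div_le_div_iff_of_pos_right hpos).mpr
      have hU0 : (0:ℝ) ≤ (U:ℝ) := by positivity
      have hL0 : (0:ℝ) ≤ (L:ℝ) := by positivity
      nlinarith
    have : (J:ℝ) ≤ (5*U+15)*(L:ℝ) / ((s:ℝ) - 1) + (3*U+2) := by linarith
    calc (J:ℝ) ≤ (5*U+15)*(L:ℝ) / ((s:ℝ) - 1) + (3*U+2) := this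
      _ ≤ (7*U+15)*(L:ℝ) / ((s:ℝ) - 1) + (3*U+2) := by linarith
      _ = (7*U+15)*(L:ℝ) / ((s:ℝ) - 1) + 3*U + 2 := by ring
  · -- semantics
    intro y hy
    set g : ℕ → ℝ := fun j => if h : j < L then y ⟨j,h⟩ else 0 with hgdef
    have hg : ∀ j, g j ∈ Set.Icc (0:ℝ) 1 := by
      intro j
      simp only [hgdef]
      split
      · exact hy _
      · exact ⟨le_refl 0, by norm_num⟩
    have hx0 : embed L y = stateOf L (QF L 1 (F0 g)) 0 := by
      funext i
      rw [stateOf_eq, QF_coeff L hL]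
      unfold embed
      by_cases hi : i < L
      · rw [dif_pos hi, if_pos hi, if_pos (show i < 1*L by omega),
          Nat.div_eq_of_lt hi, Nat.mod_eq_of_lt hi, F0_at0, add_zero]
        simp only [hgdef]
        rw [dif_pos hi]
      · rw [dif_neg hi, if_neg hi]
    rw [hx0, applyCNN_append, hl0, hsem0 g hg, applyCNN_append, hl1, hsem1 g hg,
      show (0+U) = U from Nat.zero_add U, hsem2 g hg]
    funext i
    rw [stateOf_eq, QF_coeff L hL]
    have hdm : i = (i/L)*L + (i%L) := (Nat.div_add_mod' i L).symm
    have hmod : i%L < L := Nat.mod_lt i hL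
    by_cases hiN : i < L + p0*s + J1*s + p2*s
    · rw [if_pos hiN, add_zero]
      by_cases hA : n₁ ≤ i ∧ i < n₁ + L
      · rw [dif_pos hA]
        have hj : i - n₁ < L := by omega
        have hi2 : i = (3*U+3)*L + (i - n₁) := by omega
        have hdiv := (slot_div L (3*U+3) (i - n₁) hL hj).1
        have hmd := (slot_div L (3*U+3) (i - n₁) hL hj).2
        rw [← hi2] at hdiv hmd
        rw [hdiv, hmd, if_pos (by omega : i < (3*U+12)*L), Ffin_at3]
        simp only [hgdef]
        rw [dif_pos hj]
      · rw [dif_neg hA]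
        by_cases hB : n₁ + 8*L ≤ i ∧ i < n₁ + 9*L
        · rw [dif_pos hB]
          have hj : i - (n₁ + 8*L) < L := by omega
          have hi2 : i = (3*U+11)*L + (i - (n₁ + 8*L)) := by omega
          have hdiv := (slot_div L (3*U+11) (i - (n₁ + 8*L)) hL hj).1
          have hmd := (slot_div L (3*U+11) (i - (n₁ + 8*L)) hL hj).2
          rw [← hi2] at hdiv hmd
          rw [hdiv, hmd, if_pos (by omega : i < (3*U+12)*L), Ffin_at11]
          simp only [hgdef]
          rw [dif_pos hj]
        · rw [dif_neg hB]
          by_cases hC : i < (3*U+12)*L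
          · rw [if_pos hC]
            apply Ffin_eq0
            · intro h
              have e1 : (i/L)*L = (3*U+3)*L := by rw [h]
              exact hA ⟨by omega, by omega⟩
            · intro h
              have e1 : (i/L)*L = (3*U+11)*L := by rw [h]
              exact hB ⟨by omega, by omega⟩
          · rw [if_neg hC]
    · rw [if_neg hiN, dif_neg (by omega), dif_neg (by omega)]
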